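/- arXiv:1804.04730 — 3 statements merged into one kernel-verified Lean document; each statement's English description precedes it below -/
import Mathlib

section
/- Let Q be a finite type, let c ≥ 0 be a real number, and let ρ and σ be positive semidefinite matrices over ℂ indexed by Q. Then ρ ≤ c·σ if and only if the following holds: for every pair of finite types R₁ and R₂, every purification σ̂ : R₁ × Q → ℂ of σ and every purification ρ̂ : R₂ × Q → ℂ of ρ, there exists a matrix A : Matrix R₂ R₁ ℂ with A†A ≤ 1 such that ρ̂ = √c · (A ⊗ 1_Q) σ̂, where (A ⊗ 1_Q) acts on vectors by ((A ⊗ 1_Q)v)(r₂,q) = ∑_{r₁} A(r₂,r₁)·v(r₁,q). -/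
/-!
Write a purification `v : R × Q → ℂ` as the matrix `V = of (curry v)`; then `Tr_R (v v†) = (Vᴴ V)ᵀ`,
so with `S`, `T` the matrices of purifications of `σ`, `ρ` and `N = √c • S`, the inequality
`ρ ≤ c σ` reads `Tᴴ T ≤ Nᴴ N`. Douglas' lemma turns this into a factorization `T = A N` with `Aᴴ A ≤ 1`,
and conversely `Nᴴ N - (A N)ᴴ (A N) = Nᴴ (1 - Aᴴ A) N`. For Douglas' lemma take a Hermitian
generalized inverse `Y` of `X = Nᴴ N` and put `A = T Y Nᴴ`: `N Y Nᴴ` is an orthogonal projection,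
and `T (1 - Y X) = 0` because `X (1 - Y X) = 0`.
-/

open Matrix ComplexOrder

/-- Partial trace over the first factor of a matrix indexed by `R × Q`. -/
noncomputable def ptrFst {R Q : Type} [Fintype R]
    (M : Matrix (R × Q) (R × Q) ℂ) : Matrix Q Q ℂ :=
  Matrix.of fun q q' => ∑ r, M (r, q) (r, q')

namespace Matrix

variable {l m n : Type*} [Fintype l] [Fintype m] [Fintype n]

lemma IsHermitian.exists_isHermitian_mul_mul_eq [DecidableEq n] {X : Matrix n n ℂ}
    (hX : X.IsHermitian) :
    ∃ Y : Matrix n n ℂ, Y.IsHermitian ∧ X * Y * X = X ∧ Y * X * Y = Y := by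
  have hX' : IsSelfAdjoint X := hX
  have hcont (f : ℝ → ℝ) : ContinuousOn f (spectrum ℝ X) := X.finite_real_spectrum.continuousOn f
  have hmul (f g : ℝ → ℝ) : cfc f X * cfc g X = cfc (fun x => f x * g x) X :=
    (cfc_mul f g X (hcont f) (hcont g)).symm
  have hid : cfc (fun x : ℝ => x) X = X := cfc_id' ℝ X
  -- `Y = X⁺` via `x ↦ x⁻¹`, using `(0 : ℝ)⁻¹ = 0`
  refine ⟨cfc (·⁻¹ : ℝ → ℝ) X, cfc_predicate _ X, ?_, ?_⟩
  · calc X * cfc (·⁻¹) X * X = cfc (fun x => x) X * cfc (·⁻¹) X * cfc (fun x => x) X := by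
          rw [hid]
      _ = X := by rw [hmul, hmul]; simp_rw [mul_inv_mul_cancel, hid]
  · calc cfc (·⁻¹) X * X * cfc (·⁻¹) X = cfc (·⁻¹) X * cfc (fun x => x) X * cfc (·⁻¹) X := by
          rw [hid]
      _ = cfc (·⁻¹) X := by
          rw [hmul, hmul]
          congr 1
          funext x
          simpa using mul_inv_mul_cancel x⁻¹

lemma eq_zero_of_posSemidef_neg_conjTranspose_mul_self {A : Matrix m n ℂ}
    (h : (-(Aᴴ * A)).PosSemidef) : A = 0 := by
  open scoped MatrixOrder in
  have : Aᴴ * A = 0 := le_antisymm (by simpa [le_iff] using h)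
    (posSemidef_conjTranspose_mul_self A).nonneg
  exact conjTranspose_mul_self_eq_zero.mp this

open scoped MatrixOrder in
lemma posSemidef_one_sub_of_isHermitian_of_mul_self_eq [DecidableEq n] {E : Matrix n n ℂ}
    (hE : E.IsHermitian) (hEE : E * E = E) : (1 - E).PosSemidef :=
  nonneg_iff_posSemidef.mp (IsStarProjection.one_sub_nonneg ⟨hEE, hE⟩)

/-- Douglas' factorization lemma. -/
lemma exists_mul_eq_of_posSemidef_sub [DecidableEq m]
    {M : Matrix l n ℂ} {N : Matrix m n ℂ} (h : (Nᴴ * N - Mᴴ * M).PosSemidef) :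
    ∃ K : Matrix l m ℂ, (1 - Kᴴ * K).PosSemidef ∧ M = K * N := by
  classical
  obtain ⟨Y, hY, hXYX, hYXY⟩ := (isHermitian_conjTranspose_mul_self N).exists_isHermitian_mul_mul_eq
  set X := Nᴴ * N
  set Z := 1 - Y * X with hZ
  have hXZ : X * Z = 0 := by rw [hZ, Matrix.mul_sub, mul_one, ← mul_assoc, hXYX, sub_self]
  clear_value Z
  have hMZ : M * Z = 0 := by
    apply eq_zero_of_posSemidef_neg_conjTranspose_mul_self
    have hconj : Zᴴ * (X - Mᴴ * M) * Z = -((M * Z)ᴴ * (M * Z)) := by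
      rw [Matrix.mul_sub, Matrix.sub_mul, Matrix.mul_assoc _ X, hXZ, Matrix.mul_zero, zero_sub,
        conjTranspose_mul]
      simp only [Matrix.mul_assoc]
    simpa only [hconj] using h.conjTranspose_mul_mul_same Z
  refine ⟨M * Y * Nᴴ, ?_, ?_⟩
  · have hE : (N * Y * Nᴴ).IsHermitian := isHermitian_mul_mul_conjTranspose N hY
    have hEE : N * Y * Nᴴ * (N * Y * Nᴴ) = N * Y * Nᴴ := by
      calc _ = N * (Y * X * Y) * Nᴴ := by simp only [X, Matrix.mul_assoc]
        _ = _ := by rw [hYXY]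
    have hsplit : 1 - (M * Y * Nᴴ)ᴴ * (M * Y * Nᴴ) =
        (1 - N * Y * Nᴴ) + N * Y * (X - Mᴴ * M) * (N * Y)ᴴ := by
      rw [Matrix.mul_sub, Matrix.sub_mul, conjTranspose_mul, conjTranspose_mul,
        conjTranspose_mul, conjTranspose_conjTranspose, hY.eq]
      simp only [X, Matrix.mul_assoc] at hEE ⊢
      rw [hEE]
      abel
    rw [hsplit]
    exact (posSemidef_one_sub_of_isHermitian_of_mul_self_eq hE hEE).add
      (h.mul_mul_conjTranspose_same (N * Y))
  · rw [hZ, Matrix.mul_sub, Matrix.mul_one, sub_eq_zero] at hMZ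
    simpa only [X, Matrix.mul_assoc] using hMZ

lemma posSemidef_conjTranspose_mul_self_sub_of_posSemidef_one_sub [DecidableEq m]
    {A : Matrix l m ℂ} (hA : (1 - Aᴴ * A).PosSemidef) (N : Matrix m n ℂ) :
    (Nᴴ * N - (A * N)ᴴ * (A * N)).PosSemidef := by
  convert hA.conjTranspose_mul_mul_same N using 1
  rw [Matrix.mul_sub, Matrix.sub_mul, Matrix.mul_one, conjTranspose_mul]
  simp only [Matrix.mul_assoc]

end Matrix

lemma ptrFst_vecMulVec_star {Q R : Type} [Fintype R] (v : R × Q → ℂ) :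
    ptrFst (vecMulVec v (star v)) = ((of (Function.curry v))ᴴ * of (Function.curry v))ᵀ := by
  ext q q'
  simp [ptrFst, vecMulVec_apply, mul_apply, mul_comm]

lemma Matrix.PosSemidef.exists_ptrFst_vecMulVec_star_eq {Q : Type} [Fintype Q]
    {σ : Matrix Q Q ℂ} (hσ : σ.PosSemidef) :
    ∃ v : Q × Q → ℂ, ptrFst (vecMulVec v (star v)) = σ := by
  classical
  open scoped MatrixOrder in
  obtain ⟨B, hB⟩ := CStarAlgebra.nonneg_iff_eq_star_mul_self.mp hσ.transpose.nonneg
  refine ⟨fun rq => B rq.1 rq.2, ?_⟩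
  rw [ptrFst_vecMulVec_star, show of (Function.curry fun rq : Q × Q => B rq.1 rq.2) = B from rfl,
    ← star_eq_conjTranspose, ← hB, transpose_transpose]

lemma of_curry_eq_mul_smul_iff {Q R R' : Type} [Fintype R] (v : R × Q → ℂ) (w : R' × Q → ℂ)
    (A : Matrix R' R ℂ) (a : ℂ) :
    of (Function.curry w) = A * (a • of (Function.curry v)) ↔
      ∀ r' q, w (r', q) = a * ∑ r, A r' r * v (r, q) := by
  simp only [← ext_iff, mul_apply, Matrix.smul_apply, of_apply, Function.curry_apply, smul_eq_mul,
    Finset.mul_sum, mul_left_comm a]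

lemma posSemidef_smul_ptrFst_sub_ptrFst_iff {Q R R' : Type} [Fintype Q] [Fintype R] [Fintype R']
    {c : ℝ} (hc : 0 ≤ c) (v : R × Q → ℂ) (w : R' × Q → ℂ) :
    ((c : ℂ) • ptrFst (vecMulVec v (star v)) - ptrFst (vecMulVec w (star w))).PosSemidef ↔
      (((Real.sqrt c : ℂ) • of (Function.curry v))ᴴ * ((Real.sqrt c : ℂ) • of (Function.curry v)) -
        (of (Function.curry w))ᴴ * of (Function.curry w)).PosSemidef := by
  have hsqrt : star (Real.sqrt c : ℂ) * Real.sqrt c = c := by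
    rw [Complex.star_def, Complex.conj_ofReal, ← Complex.ofReal_mul, Real.mul_self_sqrt hc]
  rw [ptrFst_vecMulVec_star, ptrFst_vecMulVec_star, ← posSemidef_transpose_iff, transpose_sub,
    transpose_smul, transpose_transpose, transpose_transpose, conjTranspose_smul, smul_mul,
    Matrix.mul_smul, smul_smul, hsqrt]

/-- `ρ ≤ c·σ` iff every purification of `ρ` is obtained from every
purification of `σ` by `√c` times a contraction acting on the purifying register. -/
theorem stmt0 {Q : Type} [Fintype Q] (c : ℝ) (hc : 0 ≤ c)
    (ρ σ : Matrix Q Q ℂ) (hρ : ρ.PosSemidef) (hσ : σ.PosSemidef) :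
    ((c : ℂ) • σ - ρ).PosSemidef ↔
      ∀ (R₁ R₂ : Type) [Fintype R₁] [Fintype R₂] [DecidableEq R₁]
        (σp : R₁ × Q → ℂ) (ρp : R₂ × Q → ℂ),
        ptrFst (Matrix.vecMulVec σp (star σp)) = σ →
        ptrFst (Matrix.vecMulVec ρp (star ρp)) = ρ →
        ∃ A : Matrix R₂ R₁ ℂ,
          ((1 : Matrix R₁ R₁ ℂ) - Aᴴ * A).PosSemidef ∧
          ∀ r₂ q, ρp (r₂, q) = (Real.sqrt c : ℂ) * ∑ r₁, A r₂ r₁ * σp (r₁, q) := by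
  constructor
  · rintro hle R₁ R₂ _ _ _ σp ρp rfl rfl
    obtain ⟨A, hA, hρA⟩ :=
      exists_mul_eq_of_posSemidef_sub ((posSemidef_smul_ptrFst_sub_ptrFst_iff hc σp ρp).mp hle)
    exact ⟨A, hA, (of_curry_eq_mul_smul_iff σp ρp A _).mp hρA⟩
  · intro H
    classical
    obtain ⟨σp, rfl⟩ := hσ.exists_ptrFst_vecMulVec_star_eq
    obtain ⟨ρp, rfl⟩ := hρ.exists_ptrFst_vecMulVec_star_eq
    obtain ⟨A, hA, hρA⟩ := H Q Q σp ρp rfl rfl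
    rw [posSemidef_smul_ptrFst_sub_ptrFst_iff hc, (of_curry_eq_mul_smul_iff σp ρp A _).mpr hρA]
    exact posSemidef_conjTranspose_mul_self_sub_of_posSemidef_one_sub hA _
end

section
/- Let ν, θ : Fin d → ℂ be unit vectors, let n ≥ 1, let r be a natural number with r ≤ n, and set p = 1 − |⟨ν,θ⟩|². Then the trace Tr(P^{r,ν} · Θ), where Θ = θ^{⊗n}(θ^{⊗n})† is the rank-one matrix of the tensor power of θ, equals the binomial tail ∑_{j=0}^{r} C(n,j) · p^j · (1−p)^{n−j} (in particular it is a real number). -/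
open Matrix ComplexOrder

/-- Rank-one matrix `v v†`. -/
noncomputable def outer {ι : Type} (v : ι → ℂ) : Matrix ι ι ℂ :=
  Matrix.vecMulVec v (star v)

/-- Tensor power of a single-subsystem vector. -/
noncomputable def tensorPow {ι : Type} (n : ℕ) (v : ι → ℂ) : (Fin n → ι) → ℂ :=
  fun x => ∏ i, v (x i)

/-- Hamming-ball projector of radius `r` around `ν^{⊗n}`. -/
noncomputable def hammProj {ι : Type} [Fintype ι] [DecidableEq ι] (n r : ℕ) (ν : ι → ℂ) :
    Matrix (Fin n → ι) (Fin n → ι) ℂ :=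
  ∑ E ∈ Finset.univ.filter (fun E : Finset (Fin n) => E.card ≤ r),
    Matrix.of fun x y =>
      ∏ i, (if i ∈ E then (1 - outer ν) else outer ν) (x i) (y i)

/-!
Both `Θ = θ^{⊗n} (θ^{⊗n})†` and every summand `⊗ᵢ M_i^E` of the Hamming-ball projector are
product operators, so `Tr(⊗ᵢ M_i^E · Θ) = ∏ᵢ ⟨θ, M_i^E θ⟩ = p^{|E|} (1 - p)^{n - |E|}`, with
`⟨θ, ν ν† θ⟩ = |⟨ν, θ⟩|² = 1 - p` and `⟨θ, (1 - ν ν†) θ⟩ = ‖θ‖² - (1 - p) = p`.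
Grouping the sets `E` by their size `j ≤ r` produces the binomial coefficients `C(n, j)`.
-/

theorem Finset.sum_powerset_filter_card_le_apply_card {α M : Type*} [AddCommMonoid M]
    (s : Finset α) (r : ℕ) (f : ℕ → M) :
    ∑ E ∈ s.powerset with E.card ≤ r, f E.card =
      ∑ j ∈ Finset.range (r + 1), s.card.choose j • f j := by
  rw [← Finset.sum_fiberwise_of_maps_to (g := Finset.card) (t := Finset.range (r + 1))
    (fun E hE => Finset.mem_range_succ_iff.mpr (Finset.mem_filter.mp hE).2)]
  refine Finset.sum_congr rfl fun j hj => ?_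
  have hfiber : {E ∈ s.powerset | E.card ≤ r}.filter (·.card = j) = s.powersetCard j := by
    ext E
    simp only [Finset.mem_filter, Finset.mem_powerset, Finset.mem_powersetCard]
    constructor
    · rintro ⟨⟨hE, -⟩, rfl⟩
      exact ⟨hE, rfl⟩
    · rintro ⟨hE, rfl⟩
      exact ⟨⟨hE, Finset.mem_range_succ_iff.mp hj⟩, rfl⟩
  rw [hfiber, ← Finset.card_powersetCard, ← Finset.sum_const]
  exact Finset.sum_congr rfl fun E hE => by rw [(Finset.mem_powersetCard.mp hE).2]

theorem Fintype.prod_ite_mem_const {α M : Type*} [Fintype α] [DecidableEq α] [CommMonoid M]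
    (E : Finset α) (a b : M) :
    ∏ i, (if i ∈ E then a else b) = a ^ E.card * b ^ (Fintype.card α - E.card) := by
  simp [Finset.prod_ite, Finset.filter_not, Finset.card_univ_sdiff]

section

variable {ι : Type} [Fintype ι]

noncomputable def kroneckerPi {n : ℕ} (M : Fin n → Matrix ι ι ℂ) :
    Matrix (Fin n → ι) (Fin n → ι) ℂ :=
  Matrix.of fun x y => ∏ i, M i (x i) (y i)

theorem trace_mul_outer (A : Matrix ι ι ℂ) (v : ι → ℂ) :
    trace (A * outer v) = star v ⬝ᵥ A *ᵥ v := by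
  rw [trace_mul_comm, outer, vecMulVec_mul, trace_vecMulVec, dotProduct_comm,
    ← dotProduct_mulVec]

theorem star_tensorPow_dotProduct_kroneckerPi_mulVec {n : ℕ} (M : Fin n → Matrix ι ι ℂ)
    (v : ι → ℂ) :
    star (tensorPow n v) ⬝ᵥ kroneckerPi M *ᵥ tensorPow n v = ∏ i, star v ⬝ᵥ M i *ᵥ v := by
  simp only [dotProduct, mulVec, Finset.mul_sum, Fintype.prod_sum]
  refine Finset.sum_congr rfl fun x _ => Finset.sum_congr rfl fun y _ => ?_
  simp only [tensorPow, kroneckerPi, Pi.star_apply, of_apply, star_prod,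
    Finset.prod_mul_distrib]

theorem star_dotProduct_self_eq_sum_normSq (θ : ι → ℂ) :
    star θ ⬝ᵥ θ = ((∑ i, Complex.normSq (θ i) : ℝ) : ℂ) := by
  simp [dotProduct, Complex.normSq_eq_conj_mul_self]

theorem star_dotProduct_outer_mulVec (ν θ : ι → ℂ) :
    star θ ⬝ᵥ outer ν *ᵥ θ = ((‖star ν ⬝ᵥ θ‖ ^ 2 : ℝ) : ℂ) := by
  rw [dotProduct_mulVec, outer, vecMul_vecMulVec, smul_dotProduct, star_dotProduct,
    smul_eq_mul, Complex.sq_norm, Complex.normSq_eq_conj_mul_self, Complex.star_def]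

variable [DecidableEq ι]

theorem star_dotProduct_one_sub_outer_mulVec (ν θ : ι → ℂ) :
    star θ ⬝ᵥ (1 - outer ν) *ᵥ θ = star θ ⬝ᵥ θ - ((‖star ν ⬝ᵥ θ‖ ^ 2 : ℝ) : ℂ) := by
  rw [sub_mulVec, one_mulVec, dotProduct_sub, star_dotProduct_outer_mulVec]

theorem hammProj_eq_sum_kroneckerPi (n r : ℕ) (ν : ι → ℂ) :
    hammProj n r ν = ∑ E ∈ Finset.univ.filter (fun E : Finset (Fin n) => E.card ≤ r),
      kroneckerPi fun i => if i ∈ E then 1 - outer ν else outer ν :=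
  rfl

theorem trace_hammProj_mul_outer_tensorPow (n r : ℕ) (ν θ : ι → ℂ) :
    trace (hammProj n r ν * outer (tensorPow n θ)) =
      ∑ j ∈ Finset.range (r + 1), n.choose j •
        ((star θ ⬝ᵥ (1 - outer ν) *ᵥ θ) ^ j * (star θ ⬝ᵥ outer ν *ᵥ θ) ^ (n - j)) := by
  simp only [hammProj_eq_sum_kroneckerPi, Finset.sum_mul, trace_sum, trace_mul_outer,
    star_tensorPow_dotProduct_kroneckerPi_mulVec,
    apply_ite (fun M : Matrix ι ι ℂ => star θ ⬝ᵥ M *ᵥ θ), Fintype.prod_ite_mem_const,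
    Fintype.card_fin]
  rw [← Finset.powerset_univ, Finset.sum_powerset_filter_card_le_apply_card _ _
    (fun j => (star θ ⬝ᵥ (1 - outer ν) *ᵥ θ) ^ j * (star θ ⬝ᵥ outer ν *ᵥ θ) ^ (n - j)),
    Finset.card_univ, Fintype.card_fin]

end

theorem stmt2_general {d : ℕ} (ν θ : Fin d → ℂ)
    (hθ : ∑ i, Complex.normSq (θ i) = 1)
    (n : ℕ) (r : ℕ) :
    Matrix.trace (hammProj n r ν * outer (tensorPow n θ)) =
      ((∑ j ∈ Finset.range (r + 1),
          (n.choose j : ℝ) *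
            (1 - ‖∑ i, (starRingEnd ℂ) (ν i) * θ i‖ ^ 2) ^ j *
            (‖∑ i, (starRingEnd ℂ) (ν i) * θ i‖ ^ 2) ^ (n - j) : ℝ) : ℂ) := by
  have hinner : ∑ i, (starRingEnd ℂ) (ν i) * θ i = star ν ⬝ᵥ θ := rfl
  rw [hinner, trace_hammProj_mul_outer_tensorPow, star_dotProduct_one_sub_outer_mulVec,
    star_dotProduct_outer_mulVec, star_dotProduct_self_eq_sum_normSq, hθ]
  push_cast
  simp only [nsmul_eq_mul, mul_assoc]

/-- the overlap of a Hamming ball projector with an i.i.d. pure state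
is the binomial tail with parameter `p = 1 − |⟨ν,θ⟩|²`. -/
theorem stmt2 {d : ℕ} (ν θ : Fin d → ℂ)
    (hν : ∑ i, Complex.normSq (ν i) = 1) (hθ : ∑ i, Complex.normSq (θ i) = 1)
    (n : ℕ) (hn : 1 ≤ n) (r : ℕ) (hr : r ≤ n) :
    Matrix.trace (hammProj n r ν * outer (tensorPow n θ)) =
      ((∑ j ∈ Finset.range (r + 1),
          (n.choose j : ℝ) *
            (1 - ‖∑ i, (starRingEnd ℂ) (ν i) * θ i‖ ^ 2) ^ j *
            (‖∑ i, (starRingEnd ℂ) (ν i) * θ i‖ ^ 2) ^ (n - j) : ℝ) : ℂ) :=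
  stmt2_general ν θ hθ n r
end

section
/- Let θ : Fin 2 × Fin 2 → ℂ be a unit vector. Suppose θ is perfectly correlated in the computational basis, i.e., θ(0,1) = 0 and θ(1,0) = 0, and perfectly correlated in the diagonal basis, i.e., ⟨(+) ⊗ (−), θ⟩ = 0 and ⟨(−) ⊗ (+), θ⟩ = 0, where (+) = (1/√2)(1,1), (−) = (1/√2)(1,−1), and ((±) ⊗ (∓))(a,b) = (±)(a)·(∓)(b). Then θ = c·Φ⁺ for some complex number c with |c| = 1 (i.e., θ equals the EPR vector up to a global phase). -/
/-!
Once the off-diagonal entries vanish, the condition `⟨(+) ⊗ (−), θ⟩ = 0` reads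
`(θ(0,0) - θ(1,1)) / 2 = 0`, so `θ = θ(0,0) • (1, 0, 0, 1) = (√2 θ(0,0)) • Φ⁺`, and normalization
`2 |θ(0,0)|² = 1` makes `√2 θ(0,0)` a phase.
-/

/-- The EPR vector `Φ⁺` on `Fin 2 × Fin 2`. -/
noncomputable def EPR : Fin 2 × Fin 2 → ℂ :=
  fun p => if p.1 = p.2 then ((1 / Real.sqrt 2 : ℝ) : ℂ) else 0

/-- The `|+⟩` vector. -/
noncomputable def plusVec : Fin 2 → ℂ := fun _ => ((1 / Real.sqrt 2 : ℝ) : ℂ)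

/-- The `|−⟩` vector. -/
noncomputable def minusVec : Fin 2 → ℂ :=
  fun a => if a = 0 then ((1 / Real.sqrt 2 : ℝ) : ℂ) else -((1 / Real.sqrt 2 : ℝ) : ℂ)

open Complex

lemma ofReal_inv_sqrt_two_sq : ((1 / Real.sqrt 2 : ℝ) : ℂ) ^ 2 = 1 / 2 := by
  rw [← ofReal_pow, div_pow, Real.sq_sqrt zero_le_two]; push_cast; ring

lemma inner_plusVec_minusVec (θ : Fin 2 × Fin 2 → ℂ) :
    ∑ p : Fin 2 × Fin 2, (starRingEnd ℂ) (plusVec p.1 * minusVec p.2) * θ p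
      = (θ (0, 0) - θ (0, 1) + θ (1, 0) - θ (1, 1)) / 2 := by
  simp only [Fintype.sum_prod_type, Fin.sum_univ_two, plusVec, minusVec, map_mul, map_neg,
    conj_ofReal, if_pos, if_neg one_ne_zero]
  linear_combination (θ (0, 0) - θ (0, 1) + θ (1, 0) - θ (1, 1)) * ofReal_inv_sqrt_two_sq

lemma eq_smul_EPR_of_diagonal {θ : Fin 2 × Fin 2 → ℂ} (h01 : θ (0, 1) = 0) (h10 : θ (1, 0) = 0)
    (h11 : θ (1, 1) = θ (0, 0)) : θ = ((Real.sqrt 2 : ℂ) * θ (0, 0)) • EPR := by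
  funext p
  fin_cases p <;> simp [EPR, h01, h10, h11, mul_right_comm _ (θ (0, 0))]

lemma norm_sqrt_two_mul {z : ℂ} (hz : normSq z = 1 / 2) : ‖(Real.sqrt 2 : ℂ) * z‖ = 1 := by
  rw [← pow_eq_one_iff_of_nonneg (norm_nonneg _) two_ne_zero, norm_mul, mul_pow,
    ← normSq_eq_norm_sq, ← normSq_eq_norm_sq, normSq_ofReal, Real.mul_self_sqrt zero_le_two, hz]
  norm_num

theorem stmt9_general (θ : Fin 2 × Fin 2 → ℂ)
    (hunit : ∑ p, Complex.normSq (θ p) = 1)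
    (hcomp01 : θ (0, 1) = 0) (hcomp10 : θ (1, 0) = 0)
    (hdiagPM : ∑ p : Fin 2 × Fin 2,
      (starRingEnd ℂ) (plusVec p.1 * minusVec p.2) * θ p = 0) :
    ∃ c : ℂ, ‖c‖ = 1 ∧ θ = c • EPR := by
  rw [inner_plusVec_minusVec, hcomp01, hcomp10] at hdiagPM
  have h11 : θ (1, 1) = θ (0, 0) := by linear_combination -2 * hdiagPM
  simp only [Fintype.sum_prod_type, Fin.sum_univ_two, hcomp01, hcomp10, h11, map_zero,
    add_zero, zero_add] at hunit
  have hnorm : normSq (θ (0, 0)) = 1 / 2 := by linarith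
  exact ⟨_, norm_sqrt_two_mul hnorm, eq_smul_EPR_of_diagonal hcomp01 hcomp10 h11⟩

/-- a two-qubit unit vector perfectly correlated in both the
computational and the diagonal bases is the EPR vector up to a global phase. -/
theorem stmt9 (θ : Fin 2 × Fin 2 → ℂ)
    (hunit : ∑ p, Complex.normSq (θ p) = 1)
    (hcomp01 : θ (0, 1) = 0) (hcomp10 : θ (1, 0) = 0)
    (hdiagPM : ∑ p : Fin 2 × Fin 2,
      (starRingEnd ℂ) (plusVec p.1 * minusVec p.2) * θ p = 0)
    (hdiagMP : ∑ p : Fin 2 × Fin 2,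
      (starRingEnd ℂ) (minusVec p.1 * plusVec p.2) * θ p = 0) :
    ∃ c : ℂ, ‖c‖ = 1 ∧ θ = c • EPR :=
  stmt9_general θ hunit hcomp01 hcomp10 hdiagPM
end
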